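/- arXiv:1903.05270 — 2 statements merged into one kernel-verified Lean document; each statement's English description precedes it below -/
import Mathlib

section
/- The poly-Bernoulli polynomials satisfy the recurrence B_n^{(k)}(z) = ∑_{m=0}^n C(n,m) B_{n-m}^{(k-1)} ∑_{l=0}^m C(m,l) (-1)^{m-l} B_l(z+1)/(n-l+1), for k ≥ 2 and n ≥ 0. -/
/-- Generating function `Li_k(1-e^{-t})/(1-e^{-t})` of the poly-Bernoulli numbers,
as a formal power series over `ℚ` (coefficientwise: `∑_{m≥1} (1-e^{-t})^{m-1}/m^k`). -/
noncomputable def pbGF (k : ℕ) : PowerSeries ℚ :=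
  PowerSeries.mk fun n => ∑ m ∈ Finset.range (n + 1),
    ((m + 1 : ℚ) ^ k)⁻¹ *
      PowerSeries.coeff n ((1 - PowerSeries.rescale (-1) (PowerSeries.exp ℚ)) ^ m)

/-- Poly-Bernoulli numbers `B_n^{(k)}`. -/
noncomputable def polyBernoulliNum (k n : ℕ) : ℚ :=
  (Nat.factorial n : ℚ) * PowerSeries.coeff n (pbGF k)

/-- Generating function `Li_k(1-e^{-t})/(e^t-1) = e^{-t}·Li_k(1-e^{-t})/(1-e^{-t})`. -/
noncomputable def cGF (k : ℕ) : PowerSeries ℚ :=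
  PowerSeries.rescale (-1) (PowerSeries.exp ℚ) * pbGF k

/-- Companion poly-Bernoulli numbers `C_n^{(k)}`. -/
noncomputable def polyCNum (k n : ℕ) : ℚ :=
  (Nat.factorial n : ℚ) * PowerSeries.coeff n (cGF k)

/-- Poly-Bernoulli polynomials `B_n^{(k)}(z)` (EGF `e^{zt}·Li_k(1-e^{-t})/(1-e^{-t})`). -/
noncomputable def polyBernoulliPoly (k n : ℕ) (z : ℚ) : ℚ :=
  ∑ j ∈ Finset.range (n + 1), (n.choose j : ℚ) * polyBernoulliNum k j * z ^ (n - j)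

/-- Companion poly-Bernoulli polynomials `C_n^{(k)}(z)` (EGF `e^{zt}·Li_k(1-e^{-t})/(e^t-1)`). -/
noncomputable def polyCPoly (k n : ℕ) (z : ℚ) : ℚ :=
  ∑ j ∈ Finset.range (n + 1), (n.choose j : ℚ) * polyCNum k j * z ^ (n - j)
open PowerSeries Finset Polynomial

noncomputable def pbE : PowerSeries ℚ := PowerSeries.rescale (-1) (PowerSeries.exp ℚ)
noncomputable def pbD : PowerSeries ℚ := 1 - pbE

lemma coeff_pbE (n : ℕ) : PowerSeries.coeff n pbE = (-1) ^ n * ((n.factorial : ℚ))⁻¹ := by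
  simp [pbE, coeff_rescale, PowerSeries.coeff_exp, algebraMap]

lemma constantCoeff_pbD : PowerSeries.constantCoeff pbD = 0 := by
  have := coeff_pbE 0
  simp [pbD, PowerSeries.coeff_zero_eq_constantCoeff] at *
  simp [this]

lemma coeff_pbD_pow {m n : ℕ} (h : n < m) : PowerSeries.coeff n (pbD ^ m) = 0 := by
  have hdvd : (PowerSeries.X : PowerSeries ℚ) ^ m ∣ pbD ^ m :=
    pow_dvd_pow_of_dvd (PowerSeries.X_dvd_iff.mpr constantCoeff_pbD) m
  exact (PowerSeries.X_pow_dvd_iff.mp hdvd) n h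

lemma pbGF_eq (k : ℕ) : pbGF k = PowerSeries.mk fun n => ∑ m ∈ Finset.range (n + 1),
    ((m + 1 : ℚ) ^ k)⁻¹ * PowerSeries.coeff n (pbD ^ m) := rfl
lemma coeff_mul_pbGF (κ : ℕ) (g : PowerSeries ℚ) (n : ℕ) :
    PowerSeries.coeff n (g * pbGF κ) =
      ∑ m ∈ Finset.range (n + 1), ((m + 1 : ℚ) ^ κ)⁻¹ * PowerSeries.coeff n (g * pbD ^ m) := by
  rw [pbGF_eq, PowerSeries.coeff_mul]
  have step : ∀ p ∈ Finset.HasAntidiagonal.antidiagonal n,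
      PowerSeries.coeff p.1 g * PowerSeries.coeff p.2
        (PowerSeries.mk fun j => ∑ m ∈ Finset.range (j + 1),
          ((m + 1 : ℚ) ^ κ)⁻¹ * PowerSeries.coeff j (pbD ^ m)) =
      ∑ m ∈ Finset.range (n + 1), ((m + 1 : ℚ) ^ κ)⁻¹ *
        (PowerSeries.coeff p.1 g * PowerSeries.coeff p.2 (pbD ^ m)) := by
    rintro ⟨a, b⟩ hp
    rw [Finset.HasAntidiagonal.mem_antidiagonal] at hp
    simp only [PowerSeries.coeff_mk]
    rw [Finset.sum_subset (Finset.range_subset_range.mpr (by omega : b + 1 ≤ n + 1))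
      (fun m _ hm => by
        rw [coeff_pbD_pow (by simp at hm ⊢; omega), mul_zero])]
    rw [Finset.mul_sum]
    exact Finset.sum_congr rfl fun m _ => by ring
  rw [Finset.sum_congr rfl step, Finset.sum_comm]
  refine Finset.sum_congr rfl fun m _ => ?_
  rw [PowerSeries.coeff_mul, Finset.mul_sum]

lemma coeff_pbGF (κ n : ℕ) :
    PowerSeries.coeff n (pbGF κ) =
      ∑ m ∈ Finset.range (n + 1), ((m + 1 : ℚ) ^ κ)⁻¹ * PowerSeries.coeff n (pbD ^ m) := by
  have := coeff_mul_pbGF κ 1 n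
  simpa using this
lemma deriv_pbD : d⁄dX ℚ pbD = pbE := by
  ext n
  rw [PowerSeries.coeff_derivative]
  simp only [pbD, map_sub, PowerSeries.coeff_one, coeff_pbE, Nat.factorial_succ]
  rw [if_neg (Nat.succ_ne_zero n)]
  have h : ((n + 1 : ℕ) : ℚ) ≠ 0 := by positivity
  push_cast
  field_simp
  ring

lemma coeff_pbE_mul_pbD_pow (n : ℕ) : PowerSeries.coeff n (pbE * pbD ^ (n + 1)) = 0 := by
  rw [mul_comm, PowerSeries.coeff_mul]
  refine Finset.sum_eq_zero fun p hp => ?_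
  rw [Finset.HasAntidiagonal.mem_antidiagonal] at hp
  rw [coeff_pbD_pow (by omega), zero_mul]

lemma key_deriv (κ n : ℕ) :
    ((n : ℚ) + 1) * PowerSeries.coeff (n + 1) (pbD * pbGF (κ + 1)) =
      PowerSeries.coeff n (cGF κ) := by
  have hc : cGF κ = pbE * pbGF κ := rfl
  have hterm : ∀ m : ℕ, ((n : ℚ) + 1) * PowerSeries.coeff (n + 1) (pbD * pbD ^ m) =
      ((m : ℚ) + 1) * PowerSeries.coeff n (pbE * pbD ^ m) := by
    intro m
    have h2 : d⁄dX ℚ (pbD ^ (m + 1)) = (m + 1) • pbD ^ m * pbE := by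
      rw [Derivation.leibniz_pow, deriv_pbD, Nat.add_sub_cancel, smul_eq_mul, smul_mul_assoc]
    have h3 := PowerSeries.coeff_derivative (pbD ^ (m + 1)) n
    rw [h2, smul_mul_assoc, map_nsmul, nsmul_eq_mul] at h3
    push_cast at h3
    have hp : pbD * pbD ^ m = pbD ^ (m + 1) := (pow_succ' pbD m).symm
    rw [hp, mul_comm pbE (pbD ^ m)]
    linear_combination -h3
  rw [hc, coeff_mul_pbGF, coeff_mul_pbGF, Finset.mul_sum]
  have step : ∀ m ∈ Finset.range (n + 1 + 1),
      ((n : ℚ) + 1) * (((m : ℚ) + 1) ^ (κ + 1))⁻¹ *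
          PowerSeries.coeff (n + 1) (pbD * pbD ^ m) =
        (((m : ℚ) + 1) ^ κ)⁻¹ * PowerSeries.coeff n (pbE * pbD ^ m) := by
    intro m _
    have hm : ((m : ℚ) + 1) ≠ 0 := by positivity
    have h := hterm m
    rw [pow_succ, mul_inv]
    field_simp
    linear_combination h
  calc ∑ m ∈ Finset.range (n + 1 + 1), ((n : ℚ) + 1) *
        ((((m : ℚ) + 1) ^ (κ + 1))⁻¹ * PowerSeries.coeff (n + 1) (pbD * pbD ^ m))
      = ∑ m ∈ Finset.range (n + 1 + 1),
          (((m : ℚ) + 1) ^ κ)⁻¹ * PowerSeries.coeff n (pbE * pbD ^ m) := by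
        refine Finset.sum_congr rfl fun m hm => ?_
        rw [← mul_assoc]
        exact step m hm
    _ = ∑ m ∈ Finset.range (n + 1),
          (((m : ℚ) + 1) ^ κ)⁻¹ * PowerSeries.coeff n (pbE * pbD ^ m) := by
        rw [Finset.sum_range_succ, coeff_pbE_mul_pbD_pow, mul_zero, add_zero]
lemma pbE_mul_exp : pbE * PowerSeries.exp ℚ = 1 := by
  have h := PowerSeries.exp_mul_exp_eq_exp_add (-1 : ℚ) 1
  rw [PowerSeries.rescale_one] at h
  simp only [RingHom.id_apply] at h
  rw [pbE, h]
  norm_num [PowerSeries.rescale_zero]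

lemma pbD_mul_exp : pbD * PowerSeries.exp ℚ = PowerSeries.exp ℚ - 1 := by
  rw [pbD, sub_mul, one_mul, pbE_mul_exp]

noncomputable def bzS (z : ℚ) : PowerSeries ℚ :=
  PowerSeries.mk fun l => ((l.factorial : ℚ))⁻¹ * Polynomial.eval (z + 1) (Polynomial.bernoulli l)

lemma bzS_mul (z : ℚ) : bzS z * (PowerSeries.exp ℚ - 1) =
    PowerSeries.X * PowerSeries.rescale (z + 1) (PowerSeries.exp ℚ) := by
  have h := Polynomial.bernoulli_generating_function (A := ℚ) (z + 1)
  have he : bzS z = PowerSeries.mk fun n =>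
      Polynomial.aeval (z + 1) ((1 / n.factorial : ℚ) • Polynomial.bernoulli n) := by
    ext n
    simp [bzS, one_div, Polynomial.aeval_def, Polynomial.eval₂_eq_eval_map]
  rw [he, h]

lemma exp_sub_one_ne : (PowerSeries.exp ℚ - 1) ≠ 0 := by
  intro h
  have := congrArg (PowerSeries.coeff 1) h
  simp [PowerSeries.coeff_exp] at this

lemma main_series (k : ℕ) (z : ℚ) : (pbD * pbGF k) * bzS z =
    PowerSeries.X * (PowerSeries.rescale z (PowerSeries.exp ℚ) * pbGF k) := by
  apply mul_right_cancel₀ exp_sub_one_ne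
  rw [mul_assoc, bzS_mul]
  have h1 : PowerSeries.rescale (z + 1) (PowerSeries.exp ℚ) =
      PowerSeries.rescale z (PowerSeries.exp ℚ) * PowerSeries.exp ℚ := by
    rw [← PowerSeries.exp_mul_exp_eq_exp_add z 1, PowerSeries.rescale_one]
    rfl
  rw [h1, ← pbD_mul_exp]
  ring
lemma fact_helper {n l j : ℕ} (h : l + j ≤ n) :
    n.factorial = n.choose (l + j) * (l + j).choose l * l.factorial * j.factorial *
      (n - l - j).factorial := by
  have h1 := Nat.choose_mul_factorial_mul_factorial h
  have h2 := Nat.choose_mul_factorial_mul_factorial (Nat.le_add_right l j)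
  have e1 : l + j - l = j := by omega
  have e2 : n - (l + j) = n - l - j := by omega
  rw [e1] at h2
  rw [e2] at h1
  calc n.factorial = n.choose (l + j) * (l + j).factorial * (n - l - j).factorial := h1.symm
    _ = n.choose (l + j) * ((l + j).choose l * l.factorial * j.factorial) *
        (n - l - j).factorial := by rw [h2]
    _ = _ := by ring

/-- Recurrence:
`B_n^{(k)}(z) = ∑_{m=0}^n C(n,m) B_{n-m}^{(k-1)} ∑_{l=0}^m C(m,l)(-1)^{m-l} B_l(z+1)/(n-l+1)`
for `k ≥ 2`, `n ≥ 0`. -/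
theorem polyBernoulliPoly_recurrence (k : ℕ) (hk : 2 ≤ k) (n : ℕ) (z : ℚ) :
    polyBernoulliPoly k n z =
      ∑ m ∈ Finset.range (n + 1), (n.choose m : ℚ) * polyBernoulliNum (k - 1) (n - m) *
        ∑ l ∈ Finset.range (m + 1), (m.choose l : ℚ) * (-1) ^ (m - l) *
          Polynomial.eval (z + 1) (Polynomial.bernoulli l) / ((n - l + 1 : ℕ) : ℚ) := by
  obtain ⟨κ, rfl⟩ : ∃ κ, k = κ + 1 := ⟨k - 1, by omega⟩
  have hκ : κ + 1 - 1 = κ := by omega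
  rw [hκ]
  -- Step A : LHS as a coefficient
  have stepA : polyBernoulliPoly (κ + 1) n z =
      (n.factorial : ℚ) * PowerSeries.coeff n
        (PowerSeries.rescale z (PowerSeries.exp ℚ) * pbGF (κ + 1)) := by
    rw [PowerSeries.coeff_mul, Finset.Nat.sum_antidiagonal_eq_sum_range_succ_mk, Finset.mul_sum,
      polyBernoulliPoly, ← Finset.sum_range_reflect]
    refine Finset.sum_congr rfl fun i hi => ?_
    rw [Finset.mem_range] at hi
    have hi' : i ≤ n := by omega
    have e1 : n + 1 - 1 - i = n - i := by omega
    have e2 : n - (n - i) = i := by omega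
    rw [e1, e2]
    unfold polyBernoulliNum
    rw [PowerSeries.coeff_rescale, PowerSeries.coeff_exp]
    have hfac := Nat.choose_mul_factorial_mul_factorial (Nat.sub_le n i)
    rw [e2, Nat.choose_symm hi'] at hfac
    have hfacQ : (n.choose i : ℚ) * (n - i).factorial * i.factorial = n.factorial := by
      exact_mod_cast congrArg (Nat.cast : ℕ → ℚ) hfac
    have h1 : (i.factorial : ℚ) ≠ 0 := Nat.cast_ne_zero.mpr (Nat.factorial_ne_zero i)
    rw [Nat.choose_symm hi', ← hfacQ]
    simp only [Algebra.algebraMap_self_apply, one_div]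
    field_simp
  -- Step B/C
  have hF0 : PowerSeries.coeff 0 (pbD * pbGF (κ + 1)) = 0 := by
    rw [PowerSeries.coeff_zero_eq_constantCoeff, map_mul, constantCoeff_pbD, zero_mul]
  have stepBC : PowerSeries.coeff n
      (PowerSeries.rescale z (PowerSeries.exp ℚ) * pbGF (κ + 1)) =
      ∑ l ∈ Finset.range (n + 1),
        PowerSeries.coeff ((n - l) + 1) (pbD * pbGF (κ + 1)) *
          PowerSeries.coeff l (bzS z) := by
    rw [← PowerSeries.coeff_succ_X_mul, ← main_series, PowerSeries.coeff_mul,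
      Finset.Nat.sum_antidiagonal_eq_sum_range_succ_mk, Finset.sum_range_succ']
    rw [hF0, zero_mul, add_zero, ← Finset.sum_range_reflect]
    refine Finset.sum_congr rfl fun l hl => ?_
    rw [Finset.mem_range] at hl
    have e1 : n + 1 - 1 - l = n - l := by omega
    have e2 : n + 1 - (n - l + 1) = l := by omega
    rw [e1, e2]
  rw [stepA, stepBC, Finset.mul_sum]
  -- RHS : distribute and swap the double sum
  have rhs1 : ∀ m ∈ Finset.range (n + 1),
      (n.choose m : ℚ) * polyBernoulliNum κ (n - m) *
        ∑ l ∈ Finset.range (m + 1), (m.choose l : ℚ) * (-1) ^ (m - l) *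
          Polynomial.eval (z + 1) (Polynomial.bernoulli l) / ((n - l + 1 : ℕ) : ℚ) =
      ∑ l ∈ Finset.range (m + 1), (n.choose m : ℚ) * polyBernoulliNum κ (n - m) *
        ((m.choose l : ℚ) * (-1) ^ (m - l) *
          Polynomial.eval (z + 1) (Polynomial.bernoulli l) / ((n - l + 1 : ℕ) : ℚ)) :=
    fun m _ => Finset.mul_sum _ _ _
  rw [Finset.sum_congr rfl rhs1]
  have swap := Finset.sum_Ico_Ico_comm 0 (n + 1) (fun l m =>
    (n.choose m : ℚ) * polyBernoulliNum κ (n - m) *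
      ((m.choose l : ℚ) * (-1) ^ (m - l) *
        Polynomial.eval (z + 1) (Polynomial.bernoulli l) / ((n - l + 1 : ℕ) : ℚ)))
  simp only [Finset.range_eq_Ico] at *
  rw [← swap]
  refine Finset.sum_congr rfl fun l hl => ?_
  rw [Finset.mem_Ico] at hl
  have hl' : l ≤ n := by omega
  rw [Finset.sum_Ico_eq_sum_range]
  have hcnt : n + 1 - l = (n - l) + 1 := by omega
  rw [hcnt]
  -- coefficient of F at (n-l)+1 via key_deriv
  have hnl : ((n - l : ℕ) : ℚ) + 1 ≠ 0 := by positivity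
  have hkd := key_deriv κ (n - l)
  have hcoe : PowerSeries.coeff ((n - l) + 1) (pbD * pbGF (κ + 1)) =
      PowerSeries.coeff (n - l) (cGF κ) * (((n - l : ℕ) : ℚ) + 1)⁻¹ := by
    rw [← hkd, mul_comm (((n - l : ℕ) : ℚ) + 1), mul_assoc, mul_inv_cancel₀ hnl, mul_one]
  rw [hcoe]
  have hc : cGF κ = pbE * pbGF κ := rfl
  rw [hc, PowerSeries.coeff_mul, Finset.Nat.sum_antidiagonal_eq_sum_range_succ_mk]
  -- expand and match termwise in j
  rw [Finset.sum_mul, Finset.sum_mul, Finset.mul_sum]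
  refine Finset.sum_congr rfl fun j hj => ?_
  rw [Finset.mem_range] at hj
  have hj' : j ≤ n - l := by omega
  have hln : l + j ≤ n := by omega
  have e3 : n - (l + j) = n - l - j := by omega
  have e4 : l + j - l = j := by omega
  dsimp only
  rw [coeff_pbE, e3, e4]
  simp only [bzS, PowerSeries.coeff_mk]
  unfold polyBernoulliNum
  have hfacQ : (n.factorial : ℚ) = (n.choose (l + j) : ℚ) * ((l + j).choose l : ℚ) *
      (l.factorial : ℚ) * (j.factorial : ℚ) * ((n - l - j).factorial : ℚ) := by
    exact_mod_cast congrArg (Nat.cast : ℕ → ℚ) (fact_helper hln)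
  have h1 : (l.factorial : ℚ) ≠ 0 := Nat.cast_ne_zero.mpr (Nat.factorial_ne_zero l)
  have h2 : (j.factorial : ℚ) ≠ 0 := Nat.cast_ne_zero.mpr (Nat.factorial_ne_zero j)
  have h3 : ((n - l + 1 : ℕ) : ℚ) = ((n - l : ℕ) : ℚ) + 1 := by push_cast; ring
  rw [h3, div_eq_mul_inv]
  have key : (n.factorial : ℚ) * ((-1) ^ j * ((j.factorial : ℚ))⁻¹ *
        PowerSeries.coeff (n - l - j) (pbGF κ)) *
        (((l.factorial : ℚ))⁻¹ * Polynomial.eval (z + 1) (Polynomial.bernoulli l)) =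
      (n.choose (l + j) : ℚ) *
        (((n - l - j).factorial : ℚ) * PowerSeries.coeff (n - l - j) (pbGF κ)) *
        (((l + j).choose l : ℚ) * (-1) ^ j *
          Polynomial.eval (z + 1) (Polynomial.bernoulli l)) := by
    rw [hfacQ]
    field_simp
  linear_combination (((n - l : ℕ) : ℚ) + 1)⁻¹ * key
end

section
/- The poly-Bernoulli polynomials satisfy the connection relation B_n^{(k)}(z) = (1/(n+1)) ∑_{l=0}^n C(n+1, l+1) B_{n-l}(z+1) B_l^{(k-1)}(-1), for k ≥ 2 and n ≥ 0. -/
open PowerSeries Finset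

noncomputable def pbF : PowerSeries ℚ := 1 - PowerSeries.rescale (-1) (PowerSeries.exp ℚ)

noncomputable def pbS (k N : ℕ) : PowerSeries ℚ :=
  ∑ m ∈ Finset.range (N + 1), PowerSeries.C ((m + 1 : ℚ) ^ k)⁻¹ * pbF ^ m

lemma pbF_const : PowerSeries.constantCoeff pbF = 0 := by
  have h1 : PowerSeries.constantCoeff (PowerSeries.rescale (-1) (PowerSeries.exp ℚ)) = 1 := by
    rw [← PowerSeries.coeff_zero_eq_constantCoeff_apply, PowerSeries.coeff_rescale,
      PowerSeries.coeff_exp]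
    simp
  simp [pbF, h1]

lemma coeff_pbF_pow {d m : ℕ} (h : d < m) : PowerSeries.coeff d (pbF ^ m) = 0 := by
  have hX : (PowerSeries.X : PowerSeries ℚ) ∣ pbF := PowerSeries.X_dvd_iff.2 pbF_const
  exact PowerSeries.X_pow_dvd_iff.1 (pow_dvd_pow_of_dvd hX m) d h

lemma coeff_pbGF_s7 {k d N : ℕ} (h : d ≤ N) :
    PowerSeries.coeff d (pbGF k) = PowerSeries.coeff d (pbS k N) := by
  rw [pbGF, PowerSeries.coeff_mk, pbS, map_sum]
  simp only [PowerSeries.coeff_C_mul]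
  rw [show (1 - PowerSeries.rescale (-1) (PowerSeries.exp ℚ)) = pbF from rfl]
  exact Finset.sum_subset (Finset.range_subset_range.2 (by omega))
    (fun m _ hm => by rw [coeff_pbF_pow (by simp at hm ⊢; omega), mul_zero])

lemma coeff_mul_pbGF_s7 (P : PowerSeries ℚ) {k d N : ℕ} (h : d ≤ N) :
    PowerSeries.coeff d (P * pbGF k) = PowerSeries.coeff d (P * pbS k N) := by
  rw [PowerSeries.coeff_mul, PowerSeries.coeff_mul]
  refine Finset.sum_congr rfl fun p hp => ?_
  rw [Finset.HasAntidiagonal.mem_antidiagonal] at hp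
  rw [coeff_pbGF_s7 (show p.2 ≤ N by omega)]

lemma deriv_pbF : (PowerSeries.derivative ℚ) pbF = 1 - pbF := by
  ext n
  rw [PowerSeries.coeff_derivative]
  simp only [pbF, map_sub, PowerSeries.coeff_one, PowerSeries.coeff_rescale,
    PowerSeries.coeff_exp, sub_sub_cancel]
  rw [if_neg (Nat.succ_ne_zero n)]
  have hn : ((n : ℚ) + 1) ≠ 0 := by positivity
  have hf : ((n.factorial : ℚ)) ≠ 0 := Nat.cast_ne_zero.2 n.factorial_ne_zero
  simp only [Nat.factorial_succ, Nat.cast_mul, Nat.cast_add, Nat.cast_one, Algebra.algebraMap_self, RingHom.id_apply]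
  field_simp
  ring

lemma deriv_key {k : ℕ} (hk : 1 ≤ k) (N : ℕ) :
    (PowerSeries.derivative ℚ) (pbF * pbS k N) = (1 - pbF) * pbS (k - 1) N := by
  have hstep : pbF * pbS k N
      = ∑ m ∈ Finset.range (N + 1), ((m + 1 : ℚ) ^ k)⁻¹ • pbF ^ (m + 1) := by
    rw [pbS, Finset.mul_sum]
    refine Finset.sum_congr rfl fun m _ => ?_
    rw [PowerSeries.smul_eq_C_mul, pow_succ]
    ring
  rw [hstep, map_sum]
  rw [show (1 - pbF) * pbS (k-1) N
      = ∑ m ∈ Finset.range (N + 1), ((m + 1 : ℚ) ^ (k-1))⁻¹ • ((1 - pbF) * pbF ^ m) by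
    rw [pbS, Finset.mul_sum]
    refine Finset.sum_congr rfl fun m _ => ?_
    rw [PowerSeries.smul_eq_C_mul]
    ring]
  refine Finset.sum_congr rfl fun m _ => ?_
  have hD : (PowerSeries.derivative ℚ) (pbF ^ (m + 1))
      = ((m + 1 : ℕ) : PowerSeries ℚ) * (pbF ^ m * (1 - pbF)) := by
    rw [Derivation.leibniz_pow, deriv_pbF, Nat.add_sub_cancel, nsmul_eq_mul, smul_eq_mul]
  have hm : ((m : ℚ) + 1) ≠ 0 := by positivity
  have hc' : (((m : ℚ) + 1) ^ k)⁻¹ * ((m + 1 : ℕ) : ℚ) = (((m : ℚ) + 1) ^ (k - 1))⁻¹ := by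
    have hpow : ((m : ℚ) + 1) ^ k = ((m : ℚ) + 1) ^ (k - 1) * ((m : ℚ) + 1) := by
      rw [← pow_succ, Nat.sub_add_cancel hk]
    push_cast
    rw [hpow, mul_inv]
    field_simp
  rw [Derivation.map_smul, hD, PowerSeries.smul_eq_C_mul, PowerSeries.smul_eq_C_mul,
    ← map_natCast (PowerSeries.C) (m + 1), ← mul_assoc, ← map_mul, hc']
  ring

lemma coeff_key {k : ℕ} (hk : 1 ≤ k) (l : ℕ) :
    ((l : ℚ) + 1) * PowerSeries.coeff (l + 1) (pbF * pbGF k)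
      = PowerSeries.coeff l (cGF (k - 1)) := by
  have hg : cGF (k-1) = (1 - pbF) * pbGF (k-1) := by
    rw [cGF, pbF]; ring_nf
  rw [hg, coeff_mul_pbGF_s7 pbF (le_refl (l+1)), coeff_mul_pbGF_s7 (1 - pbF) (Nat.le_succ l),
    ← deriv_key hk (l+1), PowerSeries.coeff_derivative]
  push_cast
  ring

lemma poly_eq_coeff (k n : ℕ) (z : ℚ) :
    polyBernoulliPoly k n z
      = (n.factorial : ℚ) * PowerSeries.coeff n
          (PowerSeries.rescale z (PowerSeries.exp ℚ) * pbGF k) := by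
  rw [PowerSeries.coeff_mul, Nat.sum_antidiagonal_eq_sum_range_succ_mk, Finset.mul_sum,
    polyBernoulliPoly, ← Finset.sum_range_reflect]
  simp only [Nat.add_sub_cancel]
  refine Finset.sum_congr rfl fun i hi => ?_
  rw [Finset.mem_range] at hi
  have hi' : i ≤ n := by omega
  rw [PowerSeries.coeff_rescale, PowerSeries.coeff_exp, polyBernoulliNum,
    Nat.choose_symm hi', Nat.sub_sub_self hi']
  have hfact : ((n.choose i : ℚ)) * (i.factorial : ℚ) * ((n-i).factorial : ℚ)
      = (n.factorial : ℚ) := by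
    exact_mod_cast congrArg Nat.cast (Nat.choose_mul_factorial_mul_factorial hi')
  have hf : ((i.factorial : ℚ)) ≠ 0 := Nat.cast_ne_zero.2 i.factorial_ne_zero
  simp only [Algebra.algebraMap_self, RingHom.id_apply]
  field_simp
  linear_combination (z ^ i * PowerSeries.coeff (n - i) (pbGF k)) * hfact

/-- Connection relation:
`B_n^{(k)}(z) = (1/(n+1)) ∑_{l=0}^n C(n+1,l+1) B_{n-l}(z+1) B_l^{(k-1)}(-1)`
for `k ≥ 2`, `n ≥ 0`. -/
theorem polyBernoulliPoly_connection (k : ℕ) (hk : 2 ≤ k) (n : ℕ) (z : ℚ) :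
    polyBernoulliPoly k n z =
      (1 / (n + 1 : ℚ)) * ∑ l ∈ Finset.range (n + 1), ((n + 1).choose (l + 1) : ℚ) *
        Polynomial.eval (z + 1) (Polynomial.bernoulli (n - l)) *
        polyBernoulliPoly (k - 1) l (-1) := by
  have hk1 : 1 ≤ k := by omega
  set G1 : PowerSeries ℚ := PowerSeries.mk fun m =>
    Polynomial.aeval (z + 1) ((1 / m.factorial : ℚ) • Polynomial.bernoulli m) with hG1
  have hexp1 : PowerSeries.rescale (-1) (PowerSeries.exp ℚ) * PowerSeries.exp ℚ = 1 := by
    calc PowerSeries.rescale (-1) (PowerSeries.exp ℚ) * PowerSeries.exp ℚ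
        = PowerSeries.rescale (-1) (PowerSeries.exp ℚ)
            * PowerSeries.rescale 1 (PowerSeries.exp ℚ) := by rw [PowerSeries.rescale_one]; rfl
      _ = PowerSeries.rescale (-1 + 1) (PowerSeries.exp ℚ) :=
          PowerSeries.exp_mul_exp_eq_exp_add _ _
      _ = 1 := by
          norm_num [PowerSeries.rescale_zero]
  have hfA : pbF = PowerSeries.rescale (-1) (PowerSeries.exp ℚ) * (PowerSeries.exp ℚ - 1) := by
    rw [mul_sub, mul_one, hexp1, pbF]
  have hGf : G1 * pbF = PowerSeries.X * PowerSeries.rescale z (PowerSeries.exp ℚ) := by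
    rw [hfA, show G1 * (PowerSeries.rescale (-1) (PowerSeries.exp ℚ) * (PowerSeries.exp ℚ - 1))
        = (G1 * (PowerSeries.exp ℚ - 1)) * PowerSeries.rescale (-1) (PowerSeries.exp ℚ) by ring,
      Polynomial.bernoulli_generating_function (z + 1), mul_assoc,
      PowerSeries.exp_mul_exp_eq_exp_add, show (z + 1 + -1 : ℚ) = z by ring]
  have key : polyBernoulliPoly k n z
      = (n.factorial : ℚ) * PowerSeries.coeff (n + 1) (G1 * (pbF * pbGF k)) := by
    rw [poly_eq_coeff, ← PowerSeries.coeff_succ_X_mul, ← mul_assoc, ← hGf, mul_assoc]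
  rw [key, PowerSeries.coeff_mul, Nat.sum_antidiagonal_eq_sum_range_succ_mk,
    Finset.sum_range_succ, Nat.sub_self,
    show PowerSeries.coeff 0 (pbF * pbGF k) = 0 from by
      rw [PowerSeries.coeff_zero_eq_constantCoeff, map_mul, pbF_const, zero_mul],
    mul_zero, add_zero, ← Finset.sum_range_reflect]
  simp only [Nat.add_sub_cancel]
  rw [Finset.mul_sum, Finset.mul_sum]
  refine Finset.sum_congr rfl fun l hl => ?_
  rw [Finset.mem_range] at hl
  have hln : l ≤ n := by omega
  rw [show n + 1 - (n - l) = l + 1 from by omega]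
  have hcoeffG1 : PowerSeries.coeff (n - l) G1
      = (1 / ((n - l).factorial : ℚ)) * Polynomial.eval (z + 1) (Polynomial.bernoulli (n - l)) := by
    rw [hG1, PowerSeries.coeff_mk, map_smul, smul_eq_mul, Polynomial.coe_aeval_eq_eval]
  have hpolyC : polyBernoulliPoly (k - 1) l (-1)
      = (l.factorial : ℚ) * (((l : ℚ) + 1) * PowerSeries.coeff (l + 1) (pbF * pbGF k)) := by
    rw [poly_eq_coeff,
      show PowerSeries.rescale (-1) (PowerSeries.exp ℚ) * pbGF (k - 1) = cGF (k - 1) from rfl,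
      ← coeff_key hk1 l]
  rw [hcoeffG1, hpolyC]
  have hc := Nat.choose_mul_factorial_mul_factorial (show l + 1 ≤ n + 1 by omega)
  rw [show n + 1 - (l + 1) = n - l from by omega] at hc
  have hcq : ((n + 1).choose (l + 1) : ℚ) * ((l + 1).factorial : ℚ) * ((n - l).factorial : ℚ)
      = ((n + 1).factorial : ℚ) := by exact_mod_cast congrArg Nat.cast hc
  have h1 : ((n - l).factorial : ℚ) ≠ 0 := Nat.cast_ne_zero.2 (Nat.factorial_ne_zero _)
  have h2 : ((n : ℚ) + 1) ≠ 0 := by positivity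
  rw [Nat.factorial_succ (l), Nat.factorial_succ n] at hcq
  push_cast at hcq
  set c := PowerSeries.coeff (l + 1) (pbF * pbGF k)
  set B := Polynomial.eval (z + 1) (Polynomial.bernoulli (n - l))
  field_simp
  linear_combination (-(B * c)) * hcq
end
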